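/- For all 1 ≤ u, v ≤ ∞, all 2 ≤ r ≤ ∞ and all n: n^{1/r} ≤ π_{r,2}(id: S_u^n → S_v^n); consequently, for all 2 ≤ s ≤ ∞: n^{1/2 − 1/s} ≤ μ_{s,2}(id: S_u^n → S_v^n). -/

import Mathlib

open scoped ENNReal NNReal BigOperators
open Filter

noncomputable section

/-- The ℓ^r-"sum" `(∑ |v i|^r)^(1/r)` of finitely many reals, with the
supremum `sup_i |v i|` for `r = ∞`. -/
def lpsum (r : ℝ≥0∞) {m : ℕ} (v : Fin m → ℝ) : ℝ :=
  if r = ∞ then ⨆ i, |v i| else (∑ i, |v i| ^ r.toReal) ^ (1 / r.toReal)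

/-- The norm of `ℓ_u^n = (ℂ^n, ‖·‖_u)` (max-norm for `u = ∞`). -/
def lunorm (u : ℝ≥0∞) {n : ℕ} (x : Fin n → ℂ) : ℝ :=
  lpsum u fun i => ‖x i‖

/-- Dual norm of a linear functional with respect to a given norm function. -/
def dualNorm {X : Type*} [AddCommGroup X] [Module ℂ X] (NX : X → ℝ) (f : X →ₗ[ℂ] ℂ) : ℝ :=
  sSup {t | ∃ x, NX x ≤ 1 ∧ t = ‖f x‖}

/-- Operator norm of a linear map with respect to given norm functions. -/
def opNorm {X Y : Type*} [AddCommGroup X] [Module ℂ X] [AddCommGroup Y] [Module ℂ Y]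
    (NX : X → ℝ) (NY : Y → ℝ) (T : X →ₗ[ℂ] Y) : ℝ :=
  sSup {t | ∃ x, NX x ≤ 1 ∧ t = NY (T x)}

/-- The weak-ℓ₂ norm `sup_{‖x'‖ ≤ 1} (∑_j |⟨x', x_j⟩|²)^{1/2}` of a finite family. -/
def weak2 {X : Type*} [AddCommGroup X] [Module ℂ X] (NX : X → ℝ) {m : ℕ}
    (x : Fin m → X) : ℝ :=
  sSup {t | ∃ f : X →ₗ[ℂ] ℂ, dualNorm NX f ≤ 1 ∧ t = lpsum 2 fun j => ‖f (x j)‖}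

/-- The (r,2)-summing norm `π_{r,2}(T)`: the least `ρ ≥ 0` such that
`(∑ ‖T x_i‖^r)^{1/r} ≤ ρ · sup_{‖x'‖ ≤ 1} (∑ |⟨x', x_i⟩|²)^{1/2}`
for all finite families, with sup-modification for `r = ∞`. -/
def summingNorm (r : ℝ≥0∞) {X Y : Type*} [AddCommGroup X] [Module ℂ X]
    [AddCommGroup Y] [Module ℂ Y] (NX : X → ℝ) (NY : Y → ℝ) (T : X →ₗ[ℂ] Y) : ℝ :=
  sInf {ρ | 0 ≤ ρ ∧ ∀ (m : ℕ) (x : Fin m → X),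
    lpsum r (fun i => NY (T (x i))) ≤ ρ * weak2 NX x}

/-- The (s,2)-mixing norm `μ_{s,2}(T)`: the least `c ≥ 0` such that
`(∑_j (∑_i |⟨y'_i, T x_j⟩|^s)^{2/s})^{1/2} ≤ c · (∑_i ‖y'_i‖^s)^{1/s} ·
 sup_{‖x'‖ ≤ 1} (∑_j |⟨x', x_j⟩|²)^{1/2}` for all finite families, with
sup-modification for `s = ∞`. -/
def mixingNorm (s : ℝ≥0∞) {X Y : Type*} [AddCommGroup X] [Module ℂ X]
    [AddCommGroup Y] [Module ℂ Y] (NX : X → ℝ) (NY : Y → ℝ) (T : X →ₗ[ℂ] Y) : ℝ :=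
  sInf {c | 0 ≤ c ∧ ∀ (k m : ℕ) (y : Fin k → (Y →ₗ[ℂ] ℂ)) (x : Fin m → X),
    lpsum 2 (fun j => lpsum s fun i => ‖(y i) (T (x j))‖) ≤
      c * lpsum s (fun i => dualNorm NY (y i)) * weak2 NX x}

/-- The infinite-dimensional complex Hilbert sequence space ℓ₂. -/
abbrev ellTwo : Type := lp (fun _ : ℕ => ℂ) 2

/-- The k-th approximation number `a_k(T) = inf{‖T - R‖ : rank R < k}`. -/
def approxNum {X Y : Type*} [AddCommGroup X] [Module ℂ X] [AddCommGroup Y] [Module ℂ Y]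
    (NX : X → ℝ) (NY : Y → ℝ) (k : ℕ) (T : X →ₗ[ℂ] Y) : ℝ :=
  sInf {t | ∃ R : X →ₗ[ℂ] Y, Module.rank ℂ (LinearMap.range R) < (k : Cardinal) ∧
    t = opNorm NX NY (T - R)}

/-- The k-th Weyl number `x_k(T) = sup{a_k(T S) : S ∈ L(ℓ₂, X), ‖S‖ ≤ 1}`. -/
def weylNum {X Y : Type*} [AddCommGroup X] [Module ℂ X] [AddCommGroup Y] [Module ℂ Y]
    (NX : X → ℝ) (NY : Y → ℝ) (k : ℕ) (T : X →ₗ[ℂ] Y) : ℝ :=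
  sSup {t | ∃ S : ellTwo →ₗ[ℂ] X, opNorm (fun z => ‖z‖) NX S ≤ 1 ∧
    t = approxNum (fun z => ‖z‖) NY k (T ∘ₗ S)}

/-- The singular values of a complex n×n matrix. -/
def singularValues {n : ℕ} (A : Matrix (Fin n) (Fin n) ℂ) : Fin n → ℝ := fun i =>
  Real.sqrt ((Matrix.isHermitian_conjTranspose_mul_self A).eigenvalues i)

/-- The Schatten-u norm `‖A‖_{S_u^n} = (∑ s_i(A)^u)^{1/u}` (operator norm for u = ∞). -/
def schattenNorm (u : ℝ≥0∞) {n : ℕ} (A : Matrix (Fin n) (Fin n) ℂ) : ℝ :=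
  lpsum u (singularValues A)

/-- A symmetric Banach sequence space: a Banach space `E ⊆ c₀` of complex sequences
in which the standard unit vectors form a symmetric (Schauder) basis. -/
structure SymmSeqSpace where
  /-- membership in E -/
  Mem : (ℕ → ℂ) → Prop
  /-- the norm of E -/
  nrm : (ℕ → ℂ) → ℝ
  zero_mem : Mem 0
  add_mem : ∀ {x y}, Mem x → Mem y → Mem (x + y)
  smul_mem : ∀ (c : ℂ) {x}, Mem x → Mem (c • x)
  /-- E ⊆ c₀ -/
  tendsto_zero : ∀ {x}, Mem x → Filter.Tendsto x Filter.atTop (nhds 0)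
  nrm_nonneg : ∀ x, 0 ≤ nrm x
  nrm_eq_zero : ∀ {x}, Mem x → (nrm x = 0 ↔ x = 0)
  nrm_add_le : ∀ {x y}, Mem x → Mem y → nrm (x + y) ≤ nrm x + nrm y
  nrm_smul : ∀ (c : ℂ) (x), nrm (c • x) = ‖c‖ * nrm x
  /-- the unit vectors belong to E -/
  unit_mem : ∀ i : ℕ, Mem (Pi.single i 1)
  /-- symmetry of the basis: permutations and unimodular sign changes are isometric -/
  symm_mem : ∀ {x} (π : Equiv.Perm ℕ) (ε : ℕ → ℂ), (∀ i, ‖ε i‖ = 1) → Mem x →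
    Mem (fun i => ε i * x (π i))
  symm : ∀ (x : ℕ → ℂ) (π : Equiv.Perm ℕ) (ε : ℕ → ℂ), (∀ i, ‖ε i‖ = 1) →
    nrm (fun i => ε i * x (π i)) = nrm x
  /-- the unit vectors form a Schauder basis: finite sections converge -/
  basis : ∀ {x}, Mem x → Filter.Tendsto
    (fun n => nrm (x - fun i => if i < n then x i else 0)) Filter.atTop (nhds 0)
  /-- completeness -/
  complete : ∀ f : ℕ → (ℕ → ℂ), (∀ k, Mem (f k)) →
    (∀ ε > (0:ℝ), ∃ N, ∀ p q, N ≤ p → N ≤ q → nrm (f p - f q) < ε) →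
    ∃ x, Mem x ∧ Filter.Tendsto (fun k => nrm (f k - x)) Filter.atTop (nhds 0)

/-- The norm of the n-th section `E_n = span{e_1,…,e_n}` of E, as a norm on ℂ^n. -/
def SymmSeqSpace.nrmFin (E : SymmSeqSpace) {n : ℕ} (x : Fin n → ℂ) : ℝ :=
  E.nrm fun i => if h : i < n then x ⟨i, h⟩ else 0

/-- The unitary-ideal norm `‖A‖_{S_E^n} = ‖(s_i(A))‖_{E_n}`. -/
def SymmSeqSpace.schatten (E : SymmSeqSpace) {n : ℕ} (A : Matrix (Fin n) (Fin n) ℂ) : ℝ :=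
  E.nrmFin fun i => ((singularValues A i : ℝ) : ℂ)

/-- p-convexity of a symmetric Banach sequence space (`p = ∞` allowed). -/
def pConvex (E : SymmSeqSpace) (p : ℝ≥0∞) : Prop :=
  ∃ M > (0:ℝ), ∀ (m : ℕ) (x : Fin m → (ℕ → ℂ)), (∀ i, E.Mem (x i)) →
    E.nrm (fun j => ((lpsum p fun i => ‖x i j‖ : ℝ) : ℂ)) ≤ M * lpsum p fun i => E.nrm (x i)

/-- q-concavity of a symmetric Banach sequence space (`q = ∞` allowed). -/
def qConcave (E : SymmSeqSpace) (q : ℝ≥0∞) : Prop :=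
  ∃ M > (0:ℝ), ∀ (m : ℕ) (x : Fin m → (ℕ → ℂ)), (∀ i, E.Mem (x i)) →
    lpsum q (fun i => E.nrm (x i)) ≤ M * E.nrm (fun j => ((lpsum q fun i => ‖x i j‖ : ℝ) : ℂ))

/-- The complexification of a real n×n matrix, acting linearly on ℂ^n. -/
def mapC {n : ℕ} (g : Matrix (Fin n) (Fin n) ℝ) : (Fin n → ℂ) →ₗ[ℂ] (Fin n → ℂ) :=
  (g.map (Complex.ofReal)).mulVecLin

/-- `N` is a norm on ℂ^n. -/
def IsNorm {n : ℕ} (N : (Fin n → ℂ) → ℝ) : Prop :=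
  (∀ x, N x = 0 ↔ x = 0) ∧ (∀ (c : ℂ) x, N (c • x) = ‖c‖ * N x) ∧
    ∀ x y, N (x + y) ≤ N x + N y

/-- `(ℂ^n, N)` has enough symmetries in the orthogonal group O(n): there is a compact
subgroup `G ⊆ O(n)` acting isometrically on `L(ℂ^n, N)` by left and right composition
such that every operator commuting with `G` is a multiple of the identity. -/
def HasEnoughSymmetries {n : ℕ} (N : (Fin n → ℂ) → ℝ) : Prop :=
  ∃ G : Set (Matrix (Fin n) (Fin n) ℝ),
    (∀ g ∈ G, g * g.transpose = 1 ∧ g.transpose * g = 1) ∧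
    (1 : Matrix (Fin n) (Fin n) ℝ) ∈ G ∧
    (∀ g ∈ G, ∀ g' ∈ G, g * g' ∈ G) ∧ (∀ g ∈ G, g.transpose ∈ G) ∧
    IsCompact G ∧
    (∀ u : (Fin n → ℂ) →ₗ[ℂ] (Fin n → ℂ), ∀ g ∈ G, ∀ g' ∈ G,
      opNorm N N (mapC g ∘ₗ u ∘ₗ mapC g') = opNorm N N u) ∧
    (∀ u : (Fin n → ℂ) →ₗ[ℂ] (Fin n → ℂ),
      (∀ g ∈ G, u ∘ₗ mapC g = mapC g ∘ₗ u) → ∃ c : ℂ, u = c • LinearMap.id)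

end

noncomputable section

/-!
Test the identity on the column of matrix units `e_j = E_{j1}`. Every `e_j` has Schatten norm one,
and the family `(e_j)` has weak-`ℓ₂` norm at most one because `∑ c_j e_j` has rank one, so that
all its Schatten norms equal `‖c‖₂`. Hence `(∑_j ‖e_j‖^r)^{1/r} = n^{1/r}` bounds `π_{r,2}`
from below. For `μ_{s,2}` test in addition against the entry functionals `A ↦ A_{i1}`, of dual norm
at most one since an entry is bounded by the largest singular value: the left side is `n^{1/2}`,
the right side `μ · n^{1/s}`.

Both norms are infima, and `sInf ∅ = 0`; so one also needs that the identity is summing and mixing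
at all, which follows from crude bounds through the Hilbert–Schmidt norm.
-/

section lpsum

variable {m : ℕ}

lemma lpsum_nonneg (r : ℝ≥0∞) (v : Fin m → ℝ) : 0 ≤ lpsum r v := by
  unfold lpsum
  split
  · exact Real.iSup_nonneg fun i => abs_nonneg _
  · positivity

lemma lpsum_mono (r : ℝ≥0∞) {v w : Fin m → ℝ} (h : ∀ i, |v i| ≤ |w i|) :
    lpsum r v ≤ lpsum r w := by
  unfold lpsum
  split
  · exact Real.iSup_le (fun i => (h i).trans
      (le_ciSup (f := fun j => |w j|) (Set.finite_range _).bddAbove i))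
      (Real.iSup_nonneg fun i => abs_nonneg _)
  · gcongr ?_ ^ _
    exact Finset.sum_le_sum fun i _ => Real.rpow_le_rpow (abs_nonneg _) (h i) ENNReal.toReal_nonneg

lemma abs_le_lpsum {r : ℝ≥0∞} (hr : r ≠ 0) (v : Fin m → ℝ) (i : Fin m) :
    |v i| ≤ lpsum r v := by
  unfold lpsum
  split
  · exact le_ciSup (f := fun j => |v j|) (Set.finite_range _).bddAbove i
  · have hp : r.toReal ≠ 0 := (ENNReal.toReal_pos hr ‹_›).ne'
    calc |v i| = (|v i| ^ r.toReal) ^ (1 / r.toReal) := by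
          rw [one_div, Real.rpow_rpow_inv (abs_nonneg _) hp]
      _ ≤ _ := by
          gcongr
          exact Finset.single_le_sum (f := fun j => |v j| ^ r.toReal)
            (fun j _ => by positivity) (Finset.mem_univ i)

lemma lpsum_const_mul {r : ℝ≥0∞} (hr : r ≠ 0) {a : ℝ} (ha : 0 ≤ a) (v : Fin m → ℝ) :
    lpsum r (fun i => a * v i) = a * lpsum r v := by
  unfold lpsum
  split
  · simp only [abs_mul, abs_of_nonneg ha, Real.mul_iSup_of_nonneg ha]
  · have hp : r.toReal ≠ 0 := (ENNReal.toReal_pos hr ‹_›).ne'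
    simp only [abs_mul, abs_of_nonneg ha, Real.mul_rpow ha (abs_nonneg _), ← Finset.mul_sum]
    rw [Real.mul_rpow (by positivity) (by positivity), one_div, Real.rpow_rpow_inv ha hp]

lemma lpsum_zero {r : ℝ≥0∞} (hr : r ≠ 0) : lpsum r (fun _ : Fin m => 0) = 0 := by
  simpa using lpsum_const_mul hr le_rfl (0 : Fin m → ℝ)

lemma lpsum_single {r : ℝ≥0∞} (hr : r ≠ 0) (i : Fin m) (c : ℝ) :
    lpsum r (Pi.single i c) = |c| := by
  refine le_antisymm ?_ (by simpa using abs_le_lpsum hr (Pi.single i c) i)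
  unfold lpsum
  split
  · refine Real.iSup_le (fun j => ?_) (abs_nonneg c)
    rcases eq_or_ne j i with rfl | hj
    · simp
    · simp [hj, abs_nonneg]
  · have hp : r.toReal ≠ 0 := (ENNReal.toReal_pos hr ‹_›).ne'
    rw [Finset.sum_eq_single i (fun j _ hj => by simp [hj, Real.zero_rpow hp]) (by simp),
      Pi.single_eq_same, one_div, Real.rpow_rpow_inv (abs_nonneg c) hp]

lemma lpsum_const_one (r : ℝ≥0∞) (hm : 0 < m) :
    lpsum r (fun _ : Fin m => 1) = (m : ℝ) ^ (1 / r.toReal) := by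
  have : Nonempty (Fin m) := ⟨⟨0, hm⟩⟩
  unfold lpsum
  split
  · rename_i hr
    simp [hr]
  · simp only [abs_one, Real.one_rpow, Finset.sum_const, Finset.card_univ, Fintype.card_fin,
      nsmul_eq_mul, mul_one]

lemma lpsum_two_eq_sqrt (v : Fin m → ℝ) : lpsum 2 v = √(∑ i, v i ^ 2) := by
  simp only [lpsum, if_neg ENNReal.ofNat_ne_top, ENNReal.toReal_ofNat, Real.rpow_two, sq_abs,
    Real.sqrt_eq_rpow]

lemma lpsum_one (v : Fin m → ℝ) : lpsum 1 v = ∑ i, |v i| := by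
  simp [lpsum]

lemma lpsum_le_lpsum {p q : ℝ≥0∞} (hp : p ≠ 0) (hp' : p ≠ ∞) (hpq : p ≤ q) (v : Fin m → ℝ) :
    lpsum q v ≤ lpsum p v := by
  set S := lpsum p v
  have hvS : ∀ i, |v i| ≤ S := abs_le_lpsum hp v
  have hS : 0 ≤ S := lpsum_nonneg p v
  by_cases hq : q = ∞
  · simpa [lpsum, hq] using Real.iSup_le hvS hS
  have hp0 : 0 < p.toReal := ENNReal.toReal_pos hp hp'
  have hpq' : p.toReal ≤ q.toReal := ENNReal.toReal_mono hq hpq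
  have hSp : S ^ p.toReal = ∑ i, |v i| ^ p.toReal := by
    simp only [S, lpsum, if_neg hp']
    rw [one_div, Real.rpow_inv_rpow (by positivity) hp0.ne']
  have hsplit : ∀ x : ℝ, 0 ≤ x → x ^ q.toReal = x ^ p.toReal * x ^ (q.toReal - p.toReal) :=
    fun x hx => by rw [← Real.rpow_add' hx (by linarith)]; ring_nf
  have hsum : ∑ i, |v i| ^ q.toReal ≤ S ^ q.toReal := by
    calc ∑ i, |v i| ^ q.toReal
        ≤ ∑ i, |v i| ^ p.toReal * S ^ (q.toReal - p.toReal) := by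
          gcongr with i
          rw [hsplit _ (abs_nonneg _)]
          gcongr
          exact hvS i
      _ = S ^ q.toReal := by rw [← Finset.sum_mul, ← hSp, hsplit S hS]
  simp only [lpsum, if_neg hq]
  calc (∑ i, |v i| ^ q.toReal) ^ (1 / q.toReal) ≤ (S ^ q.toReal) ^ (1 / q.toReal) := by gcongr
    _ = S := by rw [one_div, Real.rpow_rpow_inv hS (by linarith)]

end lpsum

namespace Matrix.IsHermitian

variable {𝕜 ι : Type*} [RCLike 𝕜] [Fintype ι] [DecidableEq ι]

/-- A diagonal entry of a Hermitian matrix is a convex combination of its eigenvalues. -/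
lemma re_apply_self_le {M : Matrix ι ι 𝕜} (hM : M.IsHermitian) {b : ℝ}
    (h : ∀ i, hM.eigenvalues i ≤ b) (l : ι) : RCLike.re (M l l) ≤ b := by
  set U := (hM.eigenvectorUnitary : Matrix ι ι 𝕜)
  have hrow : ∑ i, ‖U l i‖ ^ 2 = 1 := by
    have := congrFun (congrFun (Matrix.mem_unitaryGroup_iff.mp hM.eigenvectorUnitary.2) l) l
    simp only [Matrix.mul_apply, Matrix.star_apply, RCLike.star_def, RCLike.mul_conj,
      Matrix.one_apply_eq] at this
    exact_mod_cast this
  have hdiag : M l l = ∑ i, ((hM.eigenvalues i * ‖U l i‖ ^ 2 : ℝ) : 𝕜) := by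
    conv_lhs => rw [hM.spectral_theorem, Unitary.conjStarAlgAut_apply]
    simp only [Matrix.mul_apply, Matrix.diagonal_apply, mul_ite, mul_zero, Finset.sum_ite_eq',
      Finset.mem_univ, if_true, Matrix.star_apply, RCLike.star_def, Function.comp_apply]
    refine Finset.sum_congr rfl fun i _ => ?_
    rw [mul_right_comm, RCLike.mul_conj]
    push_cast
    ring
  calc RCLike.re (M l l) = ∑ i, hM.eigenvalues i * ‖U l i‖ ^ 2 := by
        simp only [hdiag, map_sum, RCLike.ofReal_re]
    _ ≤ ∑ i, b * ‖U l i‖ ^ 2 := by gcongr with i; exact h i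
    _ = b := by rw [← Finset.mul_sum, hrow, mul_one]

end Matrix.IsHermitian

section Schatten

open Matrix
open scoped ComplexOrder

variable {n : ℕ}

lemma singularValues_nonneg (A : Matrix (Fin n) (Fin n) ℂ) (i : Fin n) :
    0 ≤ singularValues A i :=
  Real.sqrt_nonneg _

lemma sq_singularValues (A : Matrix (Fin n) (Fin n) ℂ) (i : Fin n) :
    singularValues A i ^ 2 = (isHermitian_conjTranspose_mul_self A).eigenvalues i :=
  Real.sq_sqrt (eigenvalues_conjTranspose_mul_self_nonneg A i)

lemma conjTranspose_mul_self_apply_self (A : Matrix (Fin n) (Fin n) ℂ) (l : Fin n) :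
    (Aᴴ * A) l l = ((∑ k, ‖A k l‖ ^ 2 : ℝ) : ℂ) := by
  simp [Matrix.mul_apply, Complex.conj_mul']

lemma sum_sq_singularValues (A : Matrix (Fin n) (Fin n) ℂ) :
    ∑ i, singularValues A i ^ 2 = ∑ k, ∑ l, ‖A k l‖ ^ 2 := by
  have h := congrArg Complex.re (isHermitian_conjTranspose_mul_self A).trace_eq_sum_eigenvalues
  simp only [Matrix.trace, Matrix.diag_apply, conjTranspose_mul_self_apply_self, Complex.re_sum,
    Complex.coe_algebraMap, Complex.ofReal_re] at h
  simp only [sq_singularValues]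
  rw [← h]
  exact Finset.sum_comm

lemma singularValue_le_schattenNorm {u : ℝ≥0∞} (hu : u ≠ 0) (A : Matrix (Fin n) (Fin n) ℂ)
    (i : Fin n) : singularValues A i ≤ schattenNorm u A := by
  have h := abs_le_lpsum hu (singularValues A) i
  rwa [abs_of_nonneg (singularValues_nonneg A i)] at h

lemma norm_apply_le_schattenNorm {u : ℝ≥0∞} (hu : u ≠ 0) (A : Matrix (Fin n) (Fin n) ℂ)
    (k l : Fin n) : ‖A k l‖ ≤ schattenNorm u A := by
  have hev : ∀ i, (isHermitian_conjTranspose_mul_self A).eigenvalues i ≤ schattenNorm u A ^ 2 :=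
    fun i => by
      rw [← sq_singularValues]
      gcongr
      exacts [singularValues_nonneg A i, singularValue_le_schattenNorm hu A i]
  have hdiag := (isHermitian_conjTranspose_mul_self A).re_apply_self_le hev l
  simp only [conjTranspose_mul_self_apply_self, RCLike.re_to_complex, Complex.ofReal_re] at hdiag
  refine (pow_le_pow_iff_left₀ (norm_nonneg _) (lpsum_nonneg _ _) two_ne_zero).mp ?_
  exact (Finset.single_le_sum (f := fun k => ‖A k l‖ ^ 2) (fun _ _ => by positivity)
    (Finset.mem_univ k)).trans hdiag

/-- A matrix of rank at most one has at most one nonzero singular value. -/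
lemma schattenNorm_of_rank_le_one {u : ℝ≥0∞} (hu : u ≠ 0) {A : Matrix (Fin n) (Fin n) ℂ}
    (hA : A.rank ≤ 1) : schattenNorm u A = √(∑ k, ∑ l, ‖A k l‖ ^ 2) := by
  have hB := isHermitian_conjTranspose_mul_self A
  have hsub : Subsingleton {i // hB.eigenvalues i ≠ 0} := by
    rw [← Fintype.card_le_one_iff_subsingleton, ← hB.rank_eq_card_non_zero_eigs,
      rank_conjTranspose_mul_self]
    exact hA
  have hne : ∀ {i}, singularValues A i ≠ 0 → hB.eigenvalues i ≠ 0 := fun {i} h h0 =>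
    h (by rw [singularValues, h0, Real.sqrt_zero])
  rw [← sum_sq_singularValues, schattenNorm]
  by_cases h : ∃ i₀, singularValues A i₀ ≠ 0
  · obtain ⟨i₀, hi₀⟩ := h
    have hs : singularValues A = Pi.single i₀ (singularValues A i₀) := by
      funext i
      by_cases hi : i = i₀
      · subst hi
        simp
      · rw [Pi.single_eq_of_ne hi]
        by_contra hsi
        exact hi (congrArg Subtype.val
          (Subsingleton.elim (α := {i // hB.eigenvalues i ≠ 0}) ⟨i, hne hsi⟩ ⟨i₀, hne hi₀⟩))
    rw [hs, lpsum_single hu, Finset.sum_eq_single i₀ (fun i _ hi => by simp [hi]) (by simp),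
      Pi.single_eq_same, Real.sqrt_sq_eq_abs]
  · push Not at h
    rw [show singularValues A = fun _ => 0 from funext h, lpsum_zero hu]
    simp

lemma schattenNorm_vecMulVec_single {u : ℝ≥0∞} (hu : u ≠ 0) (c : Fin n → ℂ) (z : Fin n) :
    schattenNorm u (vecMulVec c (Pi.single z 1)) = √(∑ k, ‖c k‖ ^ 2) := by
  rw [schattenNorm_of_rank_le_one hu (rank_vecMulVec_le _ _)]
  congr 1
  refine Finset.sum_congr rfl fun k _ => ?_
  rw [Finset.sum_eq_single z (fun l _ hl => by simp [vecMulVec_apply, hl]) (by simp)]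
  simp [vecMulVec_apply]

lemma schattenNorm_single {u : ℝ≥0∞} (hu : u ≠ 0) (k l : Fin n) :
    schattenNorm u (Matrix.single k l (1 : ℂ)) = 1 := by
  rw [single_eq_single_vecMulVec_single, schattenNorm_vecMulVec_single hu,
    Finset.sum_eq_single k (fun i _ hi => by simp [hi]) (by simp)]
  simp

lemma schattenNorm_sq_le {v : ℝ≥0∞} (hv : 1 ≤ v) (A : Matrix (Fin n) (Fin n) ℂ) :
    schattenNorm v A ^ 2 ≤ n * ∑ k, ∑ l, ‖A k l‖ ^ 2 := by
  have h1 : schattenNorm v A ≤ ∑ i, singularValues A i := by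
    calc schattenNorm v A ≤ lpsum 1 (singularValues A) :=
          lpsum_le_lpsum one_ne_zero ENNReal.one_ne_top hv _
      _ = ∑ i, singularValues A i := by
          simp [lpsum_one, abs_of_nonneg (singularValues_nonneg A _)]
  calc schattenNorm v A ^ 2 ≤ (∑ i, singularValues A i) ^ 2 := by
        gcongr
        exact lpsum_nonneg _ _
    _ ≤ n * ∑ i, singularValues A i ^ 2 := by
        simpa using sq_sum_le_card_mul_sum_sq (s := Finset.univ) (f := singularValues A)
    _ = n * ∑ k, ∑ l, ‖A k l‖ ^ 2 := by rw [sum_sq_singularValues]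

end Schatten

section DualNorms

variable {X Y : Type*} [AddCommGroup X] [Module ℂ X] [AddCommGroup Y] [Module ℂ Y]
  (NX : X → ℝ) (NY : Y → ℝ)

lemma dualNorm_nonneg (f : X →ₗ[ℂ] ℂ) : 0 ≤ dualNorm NX f :=
  Real.sSup_nonneg (by rintro _ ⟨x, -, rfl⟩; exact norm_nonneg _)

lemma dualNorm_le {f : X →ₗ[ℂ] ℂ} {c : ℝ} (hc : 0 ≤ c) (h : ∀ x, NX x ≤ 1 → ‖f x‖ ≤ c) :
    dualNorm NX f ≤ c :=
  Real.sSup_le (by rintro _ ⟨x, hx, rfl⟩; exact h x hx) hc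

lemma norm_apply_le_dualNorm {f : X →ₗ[ℂ] ℂ} {C : ℝ} (hC : ∀ x, NX x ≤ 1 → ‖f x‖ ≤ C) {x : X}
    (hx : NX x ≤ 1) : ‖f x‖ ≤ dualNorm NX f :=
  le_csSup ⟨C, by rintro _ ⟨y, hy, rfl⟩; exact hC y hy⟩ ⟨x, hx, rfl⟩

lemma weak2_nonneg {m : ℕ} (x : Fin m → X) : 0 ≤ weak2 NX x :=
  Real.sSup_nonneg (by rintro _ ⟨f, -, rfl⟩; exact lpsum_nonneg _ _)

lemma weak2_le {m : ℕ} {x : Fin m → X} {c : ℝ} (hc : 0 ≤ c)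
    (h : ∀ f : X →ₗ[ℂ] ℂ, dualNorm NX f ≤ 1 → lpsum 2 (fun j => ‖f (x j)‖) ≤ c) :
    weak2 NX x ≤ c :=
  Real.sSup_le (by rintro _ ⟨f, hf, rfl⟩; exact h f hf) hc

lemma lpsum_le_weak2 {m : ℕ} {x : Fin m → X} {C : ℝ}
    (hC : ∀ f : X →ₗ[ℂ] ℂ, dualNorm NX f ≤ 1 → lpsum 2 (fun j => ‖f (x j)‖) ≤ C)
    {f : X →ₗ[ℂ] ℂ} (hf : dualNorm NX f ≤ 1) : lpsum 2 (fun j => ‖f (x j)‖) ≤ weak2 NX x :=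
  le_csSup ⟨C, by rintro _ ⟨g, hg, rfl⟩; exact hC g hg⟩ ⟨f, hf, rfl⟩

lemma lpsum_le_summingNorm {r : ℝ≥0∞} {T : X →ₗ[ℂ] Y} {C : ℝ} (hC0 : 0 ≤ C)
    (hC : ∀ (m : ℕ) (x : Fin m → X), lpsum r (fun i => NY (T (x i))) ≤ C * weak2 NX x)
    {m : ℕ} (x : Fin m → X) (hx : weak2 NX x ≤ 1) :
    lpsum r (fun i => NY (T (x i))) ≤ summingNorm r NX NY T :=
  le_csInf ⟨C, hC0, hC⟩ fun _ ⟨hρ0, hρ⟩ => (hρ m x).trans (mul_le_of_le_one_right hρ0 hx)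

lemma div_le_mixingNorm {s : ℝ≥0∞} {T : X →ₗ[ℂ] Y} {C : ℝ} (hC0 : 0 ≤ C)
    (hC : ∀ (k m : ℕ) (y : Fin k → (Y →ₗ[ℂ] ℂ)) (x : Fin m → X),
      lpsum 2 (fun j => lpsum s fun i => ‖(y i) (T (x j))‖) ≤
        C * lpsum s (fun i => dualNorm NY (y i)) * weak2 NX x)
    {k m : ℕ} (y : Fin k → (Y →ₗ[ℂ] ℂ)) (x : Fin m → X) (hx : weak2 NX x ≤ 1)
    {d : ℝ} (hd : 0 < d) (hy : lpsum s (fun i => dualNorm NY (y i)) ≤ d) :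
    lpsum 2 (fun j => lpsum s fun i => ‖(y i) (T (x j))‖) / d ≤ mixingNorm s NX NY T := by
  refine le_csInf ⟨C, hC0, hC⟩ fun c ⟨hc0, hc⟩ => ?_
  rw [div_le_iff₀ hd]
  calc _ ≤ c * lpsum s (fun i => dualNorm NY (y i)) * weak2 NX x := hc k m y x
    _ ≤ c * d * 1 := by
        gcongr
        exact weak2_nonneg NX x
    _ = c * d := mul_one _

end DualNorms

section SchattenDual

open Matrix

variable {n : ℕ} {u : ℝ≥0∞}

lemma norm_apply_le_sum_mul (f : Matrix (Fin n) (Fin n) ℂ →ₗ[ℂ] ℂ) (A : Matrix (Fin n) (Fin n) ℂ) :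
    ‖f A‖ ≤ ∑ k, ∑ l, ‖A k l‖ * ‖f (Matrix.single k l 1)‖ := by
  conv_lhs => rw [matrix_eq_sum_single A]
  simp only [map_sum]
  refine (norm_sum_le _ _).trans (Finset.sum_le_sum fun k _ => (norm_sum_le _ _).trans_eq
    (Finset.sum_congr rfl fun l _ => ?_))
  rw [← norm_mul, ← smul_eq_mul, ← map_smul, smul_single, smul_eq_mul, mul_one]

lemma norm_apply_le_dualNorm_schattenNorm (hu : u ≠ 0) (f : Matrix (Fin n) (Fin n) ℂ →ₗ[ℂ] ℂ)
    {A : Matrix (Fin n) (Fin n) ℂ} (hA : schattenNorm u A ≤ 1) :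
    ‖f A‖ ≤ dualNorm (schattenNorm u) f := by
  refine norm_apply_le_dualNorm _ (C := ∑ k, ∑ l, ‖f (Matrix.single k l 1)‖) (fun B hB => ?_) hA
  refine (norm_apply_le_sum_mul f B).trans (Finset.sum_le_sum fun k _ =>
    Finset.sum_le_sum fun l _ => ?_)
  exact mul_le_of_le_one_left (norm_nonneg _) ((norm_apply_le_schattenNorm hu B k l).trans hB)

lemma norm_apply_le_sum_mul_dualNorm (hu : u ≠ 0) (f : Matrix (Fin n) (Fin n) ℂ →ₗ[ℂ] ℂ)
    (A : Matrix (Fin n) (Fin n) ℂ) :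
    ‖f A‖ ≤ (∑ k, ∑ l, ‖A k l‖) * dualNorm (schattenNorm u) f := by
  refine (norm_apply_le_sum_mul f A).trans ?_
  simp only [Finset.sum_mul]
  gcongr with k _ l _
  exact norm_apply_le_dualNorm_schattenNorm hu f (schattenNorm_single hu k l).le

lemma dualNorm_entryLinearMap_le_one (hu : u ≠ 0) (k l : Fin n) :
    dualNorm (schattenNorm u) (entryLinearMap ℂ ℂ k l) ≤ 1 :=
  dualNorm_le _ zero_le_one fun A hA => (norm_apply_le_schattenNorm hu A k l).trans hA

lemma lpsum_le_weak2_schattenNorm (hu : u ≠ 0) {m : ℕ} (x : Fin m → Matrix (Fin n) (Fin n) ℂ)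
    {f : Matrix (Fin n) (Fin n) ℂ →ₗ[ℂ] ℂ} (hf : dualNorm (schattenNorm u) f ≤ 1) :
    lpsum 2 (fun j => ‖f (x j)‖) ≤ weak2 (schattenNorm u) x := by
  refine lpsum_le_weak2 _ (C := lpsum 2 fun j => ∑ k, ∑ l, ‖x j k l‖) (fun g hg => ?_) hf
  exact lpsum_mono 2 fun j => abs_le_abs_of_nonneg (norm_nonneg _)
    ((norm_apply_le_sum_mul_dualNorm hu g (x j)).trans (mul_le_of_le_one_right (by positivity) hg))

lemma sum_sq_norm_apply_le_weak2_sq (hu : u ≠ 0) {m : ℕ} (x : Fin m → Matrix (Fin n) (Fin n) ℂ)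
    (k l : Fin n) : ∑ j, ‖x j k l‖ ^ 2 ≤ weak2 (schattenNorm u) x ^ 2 := by
  have h := lpsum_le_weak2_schattenNorm hu x (dualNorm_entryLinearMap_le_one hu k l)
  simp only [entryLinearMap_apply, lpsum_two_eq_sqrt] at h
  exact (Real.sqrt_le_left (weak2_nonneg _ x)).mp h

lemma lpsum_sqrt_sum_sq_le_weak2 (hu : u ≠ 0) {m : ℕ} (x : Fin m → Matrix (Fin n) (Fin n) ℂ) :
    lpsum 2 (fun j => √(∑ k, ∑ l, ‖x j k l‖ ^ 2)) ≤ n * weak2 (schattenNorm u) x := by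
  have hW := weak2_nonneg (schattenNorm u) x
  rw [lpsum_two_eq_sqrt, Real.sqrt_le_left (by positivity)]
  calc ∑ j, √(∑ k, ∑ l, ‖x j k l‖ ^ 2) ^ 2 = ∑ k, ∑ l, ∑ j, ‖x j k l‖ ^ 2 := by
        rw [Finset.sum_congr rfl fun j _ => Real.sq_sqrt (by positivity), Finset.sum_comm]
        exact Finset.sum_congr rfl fun k _ => Finset.sum_comm
    _ ≤ ∑ k : Fin n, ∑ l : Fin n, weak2 (schattenNorm u) x ^ 2 := by
        gcongr with k _ l _
        exact sum_sq_norm_apply_le_weak2_sq hu x k l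
    _ = (n * weak2 (schattenNorm u) x) ^ 2 := by
        simp only [Finset.sum_const, Finset.card_univ, Fintype.card_fin, nsmul_eq_mul]
        ring

lemma sum_norm_le_mul_sqrt (A : Matrix (Fin n) (Fin n) ℂ) :
    ∑ k, ∑ l, ‖A k l‖ ≤ n * √(∑ k, ∑ l, ‖A k l‖ ^ 2) := by
  have h := sq_sum_le_card_mul_sum_sq (s := Finset.univ) (f := fun p : Fin n × Fin n => ‖A p.1 p.2‖)
  simp only [Fintype.sum_prod_type, Finset.card_univ, Fintype.card_prod, Fintype.card_fin,
    Nat.cast_mul] at h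
  rw [← Real.sqrt_mul_self (Nat.cast_nonneg n), ← Real.sqrt_mul (by positivity)]
  exact Real.le_sqrt_of_sq_le h

end SchattenDual

section Bounds

open Matrix

variable {n : ℕ} {u : ℝ≥0∞}

/-- Test a functional `f` of dual norm at most one, with values `a_j = f (E_{jz})`, against the
rank-one matrix with unit column `ā / ‖a‖₂`. -/
lemma weak2_single_le_one (hu : u ≠ 0) (z : Fin n) :
    weak2 (schattenNorm u) (fun j => Matrix.single j z (1 : ℂ)) ≤ 1 := by
  refine weak2_le _ zero_le_one fun f hf => ?_
  set a : Fin n → ℂ := fun j => f (Matrix.single j z 1)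
  rw [lpsum_two_eq_sqrt]
  rcases (Real.sqrt_nonneg (∑ j, ‖a j‖ ^ 2)).eq_or_lt with h0 | hTpos
  · rw [← h0]
    exact zero_le_one
  have hT2 := Real.sq_sqrt (by positivity : (0 : ℝ) ≤ ∑ j, ‖a j‖ ^ 2)
  generalize √(∑ j, ‖a j‖ ^ 2) = T at hTpos hT2 ⊢
  set c : Fin n → ℂ := fun j => star (a j) / T
  have hc : √(∑ j, ‖c j‖ ^ 2) = 1 := by
    simp only [c, norm_div, norm_star, Complex.norm_real, Real.norm_eq_abs, abs_of_pos hTpos,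
      div_pow, ← Finset.sum_div, ← hT2, div_self (pow_pos hTpos 2).ne', Real.sqrt_one]
  have hcol : vecMulVec c (Pi.single z 1) = ∑ j, c j • Matrix.single j z 1 := by
    ext p q
    by_cases hq : z = q <;>
      simp [vecMulVec_apply, Matrix.sum_apply, Matrix.single_apply, eq_comm, hq]
  have hfc : f (vecMulVec c (Pi.single z 1)) = T := by
    rw [hcol, map_sum]
    calc ∑ j, f (c j • Matrix.single j z 1) = ∑ j, ((‖a j‖ ^ 2 / T : ℝ) : ℂ) :=
          Finset.sum_congr rfl fun j _ => by
            rw [map_smul, smul_eq_mul, div_mul_eq_mul_div, RCLike.star_def, RCLike.conj_mul]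
            push_cast
            rfl
      _ = T := by
          rw [← Complex.ofReal_sum, ← Finset.sum_div, ← hT2, sq, mul_div_cancel_right₀ _ hTpos.ne']
  calc T = ‖f (vecMulVec c (Pi.single z 1))‖ := by
        rw [hfc, Complex.norm_real, Real.norm_eq_abs, abs_of_pos hTpos]
    _ ≤ dualNorm (schattenNorm u) f :=
        norm_apply_le_dualNorm_schattenNorm hu f (by rw [schattenNorm_vecMulVec_single hu, hc])
    _ ≤ 1 := hf

lemma lpsum_schattenNorm_le_weak2 {v r : ℝ≥0∞} (hu : u ≠ 0) (hv : 1 ≤ v) (hr : 2 ≤ r) {m : ℕ}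
    (x : Fin m → Matrix (Fin n) (Fin n) ℂ) :
    lpsum r (fun j => schattenNorm v (x j)) ≤ √n * n * weak2 (schattenNorm u) x := by
  have hx : ∀ j, schattenNorm v (x j) ≤ √n * √(∑ k, ∑ l, ‖x j k l‖ ^ 2) := fun j => by
    rw [← Real.sqrt_mul (Nat.cast_nonneg n)]
    exact Real.le_sqrt_of_sq_le (schattenNorm_sq_le hv (x j))
  calc lpsum r (fun j => schattenNorm v (x j))
      ≤ lpsum 2 (fun j => schattenNorm v (x j)) :=
        lpsum_le_lpsum two_ne_zero ENNReal.ofNat_ne_top hr _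
    _ ≤ lpsum 2 (fun j => √n * √(∑ k, ∑ l, ‖x j k l‖ ^ 2)) :=
        (lpsum_mono 2 fun j => abs_le_abs_of_nonneg (lpsum_nonneg _ _) (hx j))
    _ = √n * lpsum 2 (fun j => √(∑ k, ∑ l, ‖x j k l‖ ^ 2)) :=
        lpsum_const_mul two_ne_zero (Real.sqrt_nonneg _) _
    _ ≤ √n * (n * weak2 (schattenNorm u) x) := by
        gcongr
        exact lpsum_sqrt_sum_sq_le_weak2 hu x
    _ = √n * n * weak2 (schattenNorm u) x := by ring

lemma lpsum_lpsum_le_weak2 {v s : ℝ≥0∞} (hu : u ≠ 0) (hv : v ≠ 0) (hs : s ≠ 0) {k m : ℕ}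
    (y : Fin k → (Matrix (Fin n) (Fin n) ℂ →ₗ[ℂ] ℂ)) (x : Fin m → Matrix (Fin n) (Fin n) ℂ) :
    lpsum 2 (fun j => lpsum s fun i => ‖y i (x j)‖) ≤
      n * n * lpsum s (fun i => dualNorm (schattenNorm v) (y i)) * weak2 (schattenNorm u) x := by
  set L := lpsum s (fun i => dualNorm (schattenNorm v) (y i))
  have hL : 0 ≤ L := lpsum_nonneg _ _
  have hx : ∀ j, lpsum s (fun i => ‖y i (x j)‖) ≤ L * (n * √(∑ k, ∑ l, ‖x j k l‖ ^ 2)) := by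
    intro j
    calc lpsum s (fun i => ‖y i (x j)‖)
          ≤ lpsum s (fun i => (∑ k, ∑ l, ‖x j k l‖) * dualNorm (schattenNorm v) (y i)) :=
            (lpsum_mono s fun i => abs_le_abs_of_nonneg (norm_nonneg _)
              (norm_apply_le_sum_mul_dualNorm hv (y i) (x j)))
        _ = (∑ k, ∑ l, ‖x j k l‖) * L := lpsum_const_mul hs (by positivity) _
        _ ≤ L * (n * √(∑ k, ∑ l, ‖x j k l‖ ^ 2)) := by
            rw [mul_comm]
            gcongr
            exact sum_norm_le_mul_sqrt (x j)
  calc lpsum 2 (fun j => lpsum s fun i => ‖y i (x j)‖)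
      ≤ lpsum 2 (fun j => L * n * √(∑ k, ∑ l, ‖x j k l‖ ^ 2)) :=
        (lpsum_mono 2 fun j =>
          abs_le_abs_of_nonneg (lpsum_nonneg _ _) ((hx j).trans_eq (mul_assoc _ _ _).symm))
    _ = L * n * lpsum 2 (fun j => √(∑ k, ∑ l, ‖x j k l‖ ^ 2)) :=
        lpsum_const_mul two_ne_zero (by positivity) _
    _ ≤ L * n * (n * weak2 (schattenNorm u) x) := by
        gcongr
        exact lpsum_sqrt_sum_sq_le_weak2 hu x
    _ = n * n * L * weak2 (schattenNorm u) x := by ring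

lemma lpsum_lpsum_norm_entry_single {s : ℝ≥0∞} (hs : s ≠ 0) (hn : 0 < n) (z : Fin n) :
    lpsum 2 (fun j : Fin n => lpsum s fun i => ‖entryLinearMap ℂ ℂ i z (Matrix.single j z 1)‖) =
      (n : ℝ) ^ (1 / 2 : ℝ) := by
  have hentries : ∀ j, (fun i : Fin n => ‖entryLinearMap ℂ ℂ i z (Matrix.single j z 1)‖) =
      Pi.single j (1 : ℝ) := fun j => by
    ext i
    rcases eq_or_ne i j with rfl | hi
    · simp
    · simp [hi, hi.symm]
  simp only [hentries, lpsum_single hs, abs_one, lpsum_const_one 2 hn, ENNReal.toReal_ofNat]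

lemma lpsum_dualNorm_entryLinearMap_le {v s : ℝ≥0∞} (hv : v ≠ 0) (hn : 0 < n) (z : Fin n) :
    lpsum s (fun i => dualNorm (schattenNorm v) (entryLinearMap ℂ ℂ i z)) ≤
      (n : ℝ) ^ (1 / s.toReal) :=
  (lpsum_mono s (w := fun _ => 1) fun i => abs_le_abs_of_nonneg (dualNorm_nonneg _ _)
    (dualNorm_entryLinearMap_le_one hv i z)).trans_eq (lpsum_const_one s hn)

end Bounds

/-- Formula (16): for all `1 ≤ u, v ≤ ∞` and `2 ≤ r ≤ ∞`,
`n^{1/r} ≤ π_{r,2}(id : S_u^n → S_v^n)`, and consequently for all `2 ≤ s ≤ ∞`,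
`n^{1/2 − 1/s} ≤ μ_{s,2}(id : S_u^n → S_v^n)`. -/
theorem schatten_lower_bound (u v r : ℝ≥0∞) (hu1 : 1 ≤ u) (hv1 : 1 ≤ v) (hr2 : 2 ≤ r)
    (n : ℕ) (hn : 0 < n) :
    (n : ℝ) ^ (1 / r.toReal) ≤
      summingNorm r (schattenNorm u) (schattenNorm v)
        (LinearMap.id : Matrix (Fin n) (Fin n) ℂ →ₗ[ℂ] Matrix (Fin n) (Fin n) ℂ) ∧
    ∀ s : ℝ≥0∞, 2 ≤ s →
      (n : ℝ) ^ (1 / 2 - 1 / s.toReal) ≤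
        mixingNorm s (schattenNorm u) (schattenNorm v)
          (LinearMap.id : Matrix (Fin n) (Fin n) ℂ →ₗ[ℂ] Matrix (Fin n) (Fin n) ℂ) := by
  have hu : u ≠ 0 := (zero_lt_one.trans_le hu1).ne'
  have hv : v ≠ 0 := (zero_lt_one.trans_le hv1).ne'
  let z : Fin n := ⟨0, hn⟩
  let e : Fin n → Matrix (Fin n) (Fin n) ℂ := fun j => Matrix.single j z 1
  have he : weak2 (schattenNorm u) e ≤ 1 := weak2_single_le_one hu z
  refine ⟨?_, fun s hs2 => ?_⟩
  · calc (n : ℝ) ^ (1 / r.toReal) = lpsum r (fun j => schattenNorm v (e j)) := by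
          simp only [e, schattenNorm_single hv, lpsum_const_one r hn]
      _ ≤ _ := lpsum_le_summingNorm _ _ (T := LinearMap.id) (C := √n * n) (by positivity)
          (fun _ x => lpsum_schattenNorm_le_weak2 hu hv1 hr2 x) e he
  · have hs : s ≠ 0 := (two_ne_zero.bot_lt.trans_le hs2).ne'
    calc (n : ℝ) ^ (1 / 2 - 1 / s.toReal) = (n : ℝ) ^ (1 / 2 : ℝ) / (n : ℝ) ^ (1 / s.toReal) :=
          Real.rpow_sub (Nat.cast_pos.mpr hn) _ _
      _ = lpsum 2 (fun j => lpsum s fun i => ‖Matrix.entryLinearMap ℂ ℂ i z (e j)‖) /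
            (n : ℝ) ^ (1 / s.toReal) := by
          rw [lpsum_lpsum_norm_entry_single hs hn z]
      _ ≤ _ := div_le_mixingNorm _ _ (T := LinearMap.id) (C := n * n) (by positivity)
          (fun _ _ y x => lpsum_lpsum_le_weak2 hu hv hs y x) _ e he (by positivity)
          (lpsum_dualNorm_entryLinearMap_le hv hn z)
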